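/- For any positive integers r, m, n, every coefficient of the multivariable polynomial ∑_{k=0}^{n-1} (−1)^k (2k+1) · S_k^{(r)}(x_0,…,x_k)^m (a polynomial in the variables x_0,…,x_{n-1} with integer coefficients) is divisible by n. -/

import Mathlib

/-!
As a function of `k`, the coefficient of a fixed monomial in `S_k^{(r)}(x)^m` lies in the
`ℤ`-span of the sequences `t_l(k) = C(k+l,l)·C(k,l) = C(k+l,2l)·C(2l,l)`. This span is a ring, by
the linearization formula `t_i t_j = ∑_l C(i+j,l) C(l,i) C(l,j) t_l`, proved by induction on `i`
from the recurrence `(l+1)² t_{l+1} = (k(k+1) - l(l+1)) t_l`. It contains `C(k+j,2j)^r C(2j,j)`,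
because multiplication by `C(k+j,2j)` preserves the span of the `C(l,j)·t_l` (without the weights
`C(l,j)` the coefficients would not be integral). Finally the weighted sum telescopes on each `t_l`:
`∑_{k ≤ n} (-1)^k (2k+1) t_l(k) = (-1)^n (n+1) C(n+1+l,l) C(n,l)`.
-/

/-- The multi-variable Schmidt polynomial
`S_n^{(r)}(x_0,…,x_n) := ∑_{k=0}^{n} C(n+k,2k)^r · C(2k,k) · x_k`,
viewed as a polynomial with integer coefficients in variables indexed by `ℕ`. -/
noncomputable def schmidtMv (r n : ℕ) : MvPolynomial ℕ ℤ :=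
  ∑ k ∈ Finset.range (n + 1),
    MvPolynomial.C ((((n + k).choose (2 * k)) ^ r * ((2 * k).choose k) : ℕ) : ℤ) *
      MvPolynomial.X k

open Finset

theorem natCast_choose_succ_right_mul (n k : ℕ) :
    (n.choose (k + 1) : ℤ) * (k + 1) = n.choose k * (n - k) := by
  rcases le_or_gt k n with h | h
  · exact_mod_cast Nat.choose_succ_right_eq n k
  · simp [Nat.choose_eq_zero_of_lt h, Nat.choose_eq_zero_of_lt (Nat.lt_succ_of_lt h)]

theorem natCast_choose_mul_succ (n k : ℕ) :
    (n.choose k : ℤ) * (n + 1) = (n + 1).choose k * (n + 1 - k) := by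
  rcases le_or_gt k (n + 1) with h | h
  · exact_mod_cast Nat.choose_mul_succ_eq n k
  · simp [Nat.choose_eq_zero_of_lt h, Nat.choose_eq_zero_of_lt (Nat.lt_of_succ_lt h)]

def schmidtTerm (l k : ℕ) : ℤ := (k + l).choose l * k.choose l

theorem schmidtTerm_eq_choose_mul (l k : ℕ) :
    schmidtTerm l k = (k + l).choose (2 * l) * (2 * l).choose l := by
  have h := Nat.choose_mul (n := k + l) (k := 2 * l) (le_of_le_of_eq le_add_self (two_mul l).symm)
  rw [Nat.add_sub_cancel, two_mul, Nat.add_sub_cancel] at h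
  rw [schmidtTerm, two_mul]
  exact_mod_cast h.symm

theorem schmidtTerm_zero_left : schmidtTerm 0 = 1 := by
  ext k
  simp [schmidtTerm]

theorem schmidtTerm_succ_left (l k : ℕ) :
    ((l : ℤ) + 1) ^ 2 * schmidtTerm (l + 1) k =
      ((k : ℤ) * (k + 1) - l * (l + 1)) * schmidtTerm l k := by
  have h₁ := natCast_choose_succ_right_mul k l
  have h₂ : ((k + l + 1).choose (l + 1) : ℤ) * (l + 1) = (k + l).choose l * (k + l + 1) := by
    exact_mod_cast (Nat.add_one_mul_choose_eq (k + l) l).symm.trans (mul_comm _ _)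
  rw [schmidtTerm, schmidtTerm, ← add_assoc]
  linear_combination
    ((k + l + 1).choose (l + 1) : ℤ) * (l + 1) * h₁ + (k.choose l : ℤ) * (k - l) * h₂

def linCoeff (i j l : ℕ) : ℤ := (i + j).choose l * l.choose i * l.choose j

theorem linCoeff_eq_zero_of_lt {i j l : ℕ} (h : i + j < l) : linCoeff i j l = 0 := by
  simp [linCoeff, Nat.choose_eq_zero_of_lt h]

theorem linCoeff_succ_left_zero (i j : ℕ) :
    ((i : ℤ) + 1) ^ 2 * linCoeff (i + 1) j 0 = -(i * (i + 1)) * linCoeff i j 0 := by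
  rcases i with _ | i <;> simp [linCoeff]

theorem linCoeff_succ_left_succ (i j l : ℕ) :
    ((i : ℤ) + 1) ^ 2 * linCoeff (i + 1) j (l + 1) =
      ((l + 1 : ℤ) * (l + 2) - i * (i + 1)) * linCoeff i j (l + 1) +
        ((l : ℤ) + 1) ^ 2 * linCoeff i j l := by
  rw [linCoeff, linCoeff, linCoeff, add_right_comm]
  have h₁ := natCast_choose_succ_right_mul (l + 1) i
  have h₂ : ((i + j + 1).choose (l + 1) : ℤ) = (i + j).choose l + (i + j).choose (l + 1) := by
    exact_mod_cast Nat.choose_succ_succ' (i + j) l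
  have h₃ := natCast_choose_succ_right_mul (i + j) l
  have h₄ := natCast_choose_mul_succ l i
  have h₅ := natCast_choose_mul_succ l j
  push_cast at h₁ h₃ ⊢
  linear_combination
    (((i : ℤ) + 1) * (i + j + 1).choose (l + 1) * (l + 1).choose j) * h₁
    + (((l : ℤ) + 1 - i) * (i + 1) * (l + 1).choose i * (l + 1).choose j) * h₂
    - (((l : ℤ) + 1 - i) * (l + 1).choose i * (l + 1).choose j) * h₃
    - (((l : ℤ) + 1 - j) * (i + j).choose l * (l + 1).choose j) * h₄
    - (((l : ℤ) + 1) * (i + j).choose l * l.choose i) * h₅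

theorem schmidtTerm_mul_schmidtTerm (i j k : ℕ) :
    schmidtTerm i k * schmidtTerm j k =
      ∑ l ∈ range (i + j + 1), linCoeff i j l * schmidtTerm l k := by
  induction i with
  | zero =>
    rw [schmidtTerm_zero_left, Pi.one_apply, one_mul, zero_add,
      sum_eq_single_of_mem j (self_mem_range_succ j)]
    · simp [linCoeff]
    · intro l _ hlj
      rcases lt_or_gt_of_ne hlj with h | h <;> simp [linCoeff, Nat.choose_eq_zero_of_lt h]
  | succ i ih =>
    set N := i + j + 1
    set w : ℕ → ℤ := fun l => l * (l + 1)
    have hN : i + 1 + j + 1 = N + 1 := by omega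
    refine mul_left_cancel₀ (by positivity : ((i : ℤ) + 1) ^ 2 ≠ 0) ?_
    calc ((i : ℤ) + 1) ^ 2 * (schmidtTerm (i + 1) k * schmidtTerm j k)
        = ∑ l ∈ range N, linCoeff i j l * (((k : ℤ) * (k + 1) - w i) * schmidtTerm l k) := by
          rw [← mul_assoc, schmidtTerm_succ_left, mul_assoc, ih, mul_sum]
          exact sum_congr rfl fun l _ => by ring
      _ = ∑ l ∈ range N, linCoeff i j l * ((l + 1) ^ 2 * schmidtTerm (l + 1) k)
          + ∑ l ∈ range (N + 1), (w l - w i) * linCoeff i j l * schmidtTerm l k := by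
          rw [sum_range_succ _ N, linCoeff_eq_zero_of_lt (by omega), mul_zero, zero_mul, add_zero,
            ← sum_add_distrib]
          refine sum_congr rfl fun l _ => ?_
          linear_combination (-linCoeff i j l) * schmidtTerm_succ_left l k
      _ = ∑ l ∈ range (N + 1), ((i : ℤ) + 1) ^ 2 * (linCoeff (i + 1) j l * schmidtTerm l k) := by
          rw [sum_range_succ' (fun l => (w l - w i) * linCoeff i j l * schmidtTerm l k),
            sum_range_succ' (fun l => ((i : ℤ) + 1) ^ 2 * (linCoeff (i + 1) j l * schmidtTerm l k)),
            ← add_assoc, ← sum_add_distrib]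
          congr 1
          · refine sum_congr rfl fun l _ => ?_
            simp only [w, Nat.cast_add, Nat.cast_one]
            linear_combination (-schmidtTerm (l + 1) k) * linCoeff_succ_left_succ i j l
          · linear_combination (-schmidtTerm 0 k) * linCoeff_succ_left_zero i j
      _ = ((i : ℤ) + 1) ^ 2 *
            ∑ l ∈ range (i + 1 + j + 1), linCoeff (i + 1) j l * schmidtTerm l k := by
          rw [hN, mul_sum]

theorem add_choose_mul_choose {j l m : ℕ} (hm : m ≤ l + j) :
    (j + l).choose m * m.choose l = (l + j).choose j * j.choose (l + j - m) := by
  rcases lt_or_ge m l with h | h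
  · rw [Nat.choose_eq_zero_of_lt h, Nat.choose_eq_zero_of_lt (by omega : j < l + j - m), mul_zero,
      mul_zero]
  · rw [Nat.choose_mul h, Nat.add_sub_cancel, ← Nat.choose_symm_add, add_comm l j,
      ← Nat.choose_symm (by omega : m - l ≤ j), show j - (m - l) = j + l - m by omega]

theorem choose_mul_linCoeff {j l m : ℕ} (hm : m ≤ l + j) :
    (l.choose j : ℤ) * linCoeff j l m =
      (2 * j).choose j * (m.choose j * ((l + j).choose (2 * j) * j.choose (l + j - m))) := by
  have h₁ : ((j + l).choose m * m.choose l : ℤ) = (l + j).choose j * j.choose (l + j - m) := by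
    exact_mod_cast add_choose_mul_choose hm
  have h₂ := schmidtTerm_eq_choose_mul j l
  rw [schmidtTerm] at h₂
  rw [linCoeff]
  linear_combination
    (l.choose j * m.choose j : ℤ) * h₁ + (m.choose j * j.choose (l + j - m) : ℤ) * h₂

theorem choose_mul_choose_mul_schmidtTerm (j l k : ℕ) :
    (l.choose j : ℤ) * ((k + j).choose (2 * j) * schmidtTerm l k) =
      ∑ m ∈ range (l + j + 1),
        ((l + j).choose (2 * j) * j.choose (l + j - m) : ℤ) * (m.choose j * schmidtTerm m k) := by
  have hpos : ((2 * j).choose j : ℤ) ≠ 0 := by exact_mod_cast (Nat.choose_pos (by omega)).ne'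
  refine mul_left_cancel₀ hpos ?_
  calc ((2 * j).choose j : ℤ) * ((l.choose j : ℤ) * ((k + j).choose (2 * j) * schmidtTerm l k))
      = l.choose j * (schmidtTerm j k * schmidtTerm l k) := by
        rw [schmidtTerm_eq_choose_mul j k]; ring
    _ = ∑ m ∈ range (l + j + 1), l.choose j * linCoeff j l m * schmidtTerm m k := by
        rw [schmidtTerm_mul_schmidtTerm, add_comm j l, mul_sum]
        exact sum_congr rfl fun m _ => by ring
    _ = _ := by
        rw [mul_sum]
        refine sum_congr rfl fun m hm => ?_
        rw [choose_mul_linCoeff (Nat.lt_succ_iff.mp (mem_range.mp hm))]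
        ring

def schmidtSpan : Submodule ℤ (ℕ → ℤ) := Submodule.span ℤ (Set.range schmidtTerm)

theorem sum_smul_schmidtTerm_mem (s : Finset ℕ) (c : ℕ → ℤ) :
    ∑ l ∈ s, c l • schmidtTerm l ∈ schmidtSpan :=
  sum_mem fun l _ => Submodule.smul_mem _ _ (Submodule.subset_span ⟨l, rfl⟩)

theorem schmidtSpan_mul_le : schmidtSpan * schmidtSpan ≤ schmidtSpan := by
  rw [schmidtSpan, Submodule.span_mul_span, Submodule.span_le]
  rintro _ ⟨_, ⟨i, rfl⟩, _, ⟨j, rfl⟩, rfl⟩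
  have h : schmidtTerm i * schmidtTerm j =
      ∑ l ∈ range (i + j + 1), linCoeff i j l • schmidtTerm l := by
    ext k
    simp [schmidtTerm_mul_schmidtTerm, Finset.sum_apply]
  show schmidtTerm i * schmidtTerm j ∈ schmidtSpan
  exact h ▸ sum_smul_schmidtTerm_mem _ _

def schmidtSubalgebra : Subalgebra ℤ (ℕ → ℤ) :=
  schmidtSpan.toSubalgebra (schmidtTerm_zero_left ▸ Submodule.subset_span ⟨0, rfl⟩)
    fun _ _ hf hg => schmidtSpan_mul_le (Submodule.mul_mem_mul hf hg)

theorem mem_schmidtSubalgebra {f : ℕ → ℤ} : f ∈ schmidtSubalgebra ↔ f ∈ schmidtSpan :=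
  Submodule.mem_toSubalgebra

def weightedSchmidtSpan (j : ℕ) : Submodule ℤ (ℕ → ℤ) :=
  Submodule.span ℤ (Set.range fun l => (l.choose j : ℤ) • schmidtTerm l)

theorem choose_smul_schmidtTerm_mem (j l : ℕ) :
    (l.choose j : ℤ) • schmidtTerm l ∈ weightedSchmidtSpan j :=
  Submodule.subset_span ⟨l, rfl⟩

theorem weightedSchmidtSpan_le (j : ℕ) : weightedSchmidtSpan j ≤ schmidtSpan :=
  Submodule.span_le.mpr <| Set.range_subset_iff.mpr fun l =>
    Submodule.smul_mem _ _ (Submodule.subset_span ⟨l, rfl⟩)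

theorem choose_mul_mem_weightedSchmidtSpan {j : ℕ} {f : ℕ → ℤ} (hf : f ∈ weightedSchmidtSpan j) :
    (fun k => ((k + j).choose (2 * j) : ℤ)) * f ∈ weightedSchmidtSpan j := by
  refine (Submodule.span_le (p := (weightedSchmidtSpan j).comap (LinearMap.mulLeft ℤ _)).mpr ?_ hf)
  rintro _ ⟨l, rfl⟩
  have h : (fun k => ((k + j).choose (2 * j) : ℤ)) * ((l.choose j : ℤ) • schmidtTerm l) =
      ∑ m ∈ range (l + j + 1), ((l + j).choose (2 * j) * j.choose (l + j - m) : ℤ) •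
        ((m.choose j : ℤ) • schmidtTerm m) := by
    ext k
    simp only [Pi.mul_apply, Pi.smul_apply, smul_eq_mul, Finset.sum_apply]
    rw [← choose_mul_choose_mul_schmidtTerm]
    ring
  rw [SetLike.mem_coe, Submodule.mem_comap, LinearMap.mulLeft_apply, h]
  exact sum_mem fun m _ => Submodule.smul_mem _ _ (choose_smul_schmidtTerm_mem j m)

theorem choose_pow_mul_mem_schmidtSubalgebra (j : ℕ) {r : ℕ} (hr : r ≠ 0) :
    (fun k => ((k + j).choose (2 * j) : ℤ) ^ r * (2 * j).choose j) ∈ schmidtSubalgebra := by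
  obtain ⟨s, rfl⟩ := Nat.exists_eq_add_one_of_ne_zero hr
  have hmem : ∀ s, (fun k => ((k + j).choose (2 * j) : ℤ)) ^ s * schmidtTerm j ∈
      weightedSchmidtSpan j := by
    intro s
    induction s with
    | zero => simpa using choose_smul_schmidtTerm_mem j j
    | succ s ih => simpa only [pow_succ', mul_assoc] using choose_mul_mem_weightedSchmidtSpan ih
  rw [mem_schmidtSubalgebra]
  convert weightedSchmidtSpan_le j (hmem s) using 1
  ext k
  simp only [Pi.mul_apply, Pi.pow_apply, schmidtTerm_eq_choose_mul]
  ring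

theorem sum_range_alternating_mul_schmidtTerm (l n : ℕ) :
    ∑ k ∈ range (n + 1), (-1 : ℤ) ^ k * (2 * k + 1) * schmidtTerm l k =
      (-1) ^ n * (n + 1) * (n + 1 + l).choose l * n.choose l := by
  induction n with
  | zero => rcases l with _ | l <;> simp [schmidtTerm]
  | succ n ih =>
    rw [sum_range_succ, ih, schmidtTerm]
    have h₁ := natCast_choose_mul_succ n l
    have h₂ := natCast_choose_mul_succ (n + 1 + l) l
    rw [add_right_comm _ l 1] at h₂
    push_cast at h₂ ⊢
    linear_combination
      (-1 : ℤ) ^ n * (n + 1 + l).choose l * h₁ - (-1 : ℤ) ^ n * (n + 1).choose l * h₂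

theorem dvd_sum_alternating_of_mem {f : ℕ → ℤ} (hf : f ∈ schmidtSpan) (n : ℕ) :
    (n : ℤ) ∣ ∑ k ∈ range n, (-1 : ℤ) ^ k * (2 * k + 1) * f k := by
  let L : (ℕ → ℤ) →ₗ[ℤ] ℤ := ∑ k ∈ range n, ((-1 : ℤ) ^ k * (2 * k + 1)) • LinearMap.proj k
  have hL (g : ℕ → ℤ) : L g = ∑ k ∈ range n, (-1 : ℤ) ^ k * (2 * k + 1) * g k := by simp [L]
  suffices schmidtSpan ≤ Submodule.comap L (Ideal.span {(n : ℤ)}) by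
    simpa [hL, Ideal.mem_span_singleton] using this hf
  refine Submodule.span_le.mpr (Set.range_subset_iff.mpr fun l => ?_)
  rw [SetLike.mem_coe, Submodule.mem_comap, hL, Ideal.mem_span_singleton]
  rcases n with _ | n
  · simp
  · rw [sum_range_alternating_mul_schmidtTerm]
    exact ⟨(-1) ^ n * (n + 1 + l).choose l * n.choose l, by push_cast; ring⟩

theorem coeff_pow_mem_of_forall_coeff_mem {ι σ R : Type*} [CommSemiring R]
    (A : Subalgebra R (ι → R)) {P : ι → MvPolynomial σ R}
    (hP : ∀ d, (fun i => (P i).coeff d) ∈ A) (m : ℕ) (d : σ →₀ ℕ) :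
    (fun i => (P i ^ m).coeff d) ∈ A := by
  classical
  induction m generalizing d with
  | zero =>
    simp only [pow_zero, MvPolynomial.coeff_one]
    split_ifs
    · exact one_mem A
    · exact zero_mem A
  | succ m ih =>
    have h : (fun i => (P i ^ (m + 1)).coeff d) =
        ∑ x ∈ antidiagonal d, (fun i => (P i ^ m).coeff x.1) * fun i => (P i).coeff x.2 := by
      ext i
      simp [pow_succ, MvPolynomial.coeff_mul, Finset.sum_apply]
    rw [h]
    exact sum_mem fun x _ => mul_mem (ih x.1) (hP x.2)

theorem coeff_single_schmidtMv {r : ℕ} (hr : r ≠ 0) (j k : ℕ) :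
    (schmidtMv r k).coeff (Finsupp.single j 1) =
      ((k + j).choose (2 * j) : ℤ) ^ r * (2 * j).choose j := by
  simp only [schmidtMv, MvPolynomial.coeff_sum, MvPolynomial.coeff_C_mul, MvPolynomial.coeff_X,
    Finsupp.single_left_inj one_ne_zero, mul_ite, mul_one, mul_zero, sum_ite_eq', mem_range]
  split_ifs with h
  · push_cast; ring
  · simp [Nat.choose_eq_zero_of_lt (by omega : k + j < 2 * j), hr]

theorem coeff_schmidtMv_eq_zero {r k : ℕ} {d : ℕ →₀ ℕ} (hd : ∀ j, Finsupp.single j 1 ≠ d) :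
    (schmidtMv r k).coeff d = 0 := by
  simp only [schmidtMv, MvPolynomial.coeff_sum, MvPolynomial.coeff_C_mul, MvPolynomial.coeff_X, hd,
    if_false, mul_zero, sum_const_zero]

theorem coeff_schmidtMv_mem {r : ℕ} (hr : r ≠ 0) (d : ℕ →₀ ℕ) :
    (fun k => (schmidtMv r k).coeff d) ∈ schmidtSubalgebra := by
  by_cases hd : ∃ j, Finsupp.single j 1 = d
  · obtain ⟨j, rfl⟩ := hd
    simpa only [coeff_single_schmidtMv hr] using choose_pow_mul_mem_schmidtSubalgebra j hr
  · rw [not_exists] at hd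
    simp only [coeff_schmidtMv_eq_zero hd]
    exact zero_mem _

theorem sum_schmidtMv_pow_alt_dvd_general (r m n : ℕ) (hr : 0 < r) :
    ∀ d : ℕ →₀ ℕ,
      (n : ℤ) ∣ MvPolynomial.coeff d
        (∑ k ∈ Finset.range n, ((-1 : ℤ) ^ k * (2 * (k : ℤ) + 1)) • (schmidtMv r k) ^ m) := by
  intro d
  simp only [MvPolynomial.coeff_sum, MvPolynomial.coeff_smul, smul_eq_mul]
  exact dvd_sum_alternating_of_mem (mem_schmidtSubalgebra.mp
    (coeff_pow_mem_of_forall_coeff_mem _ (coeff_schmidtMv_mem hr.ne') m d)) n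

/-- For any positive integers `r`, `m`, `n`, every coefficient of
`∑_{k=0}^{n-1} (−1)^k (2k+1) · S_k^{(r)}(x_0,…,x_k)^m` is divisible by `n`. -/
theorem sum_schmidtMv_pow_alt_dvd (r m n : ℕ) (hr : 0 < r) (hm : 0 < m) (hn : 0 < n) :
    ∀ d : ℕ →₀ ℕ,
      (n : ℤ) ∣ MvPolynomial.coeff d
        (∑ k ∈ Finset.range n, ((-1 : ℤ) ^ k * (2 * (k : ℤ) + 1)) • (schmidtMv r k) ^ m) :=
  sum_schmidtMv_pow_alt_dvd_general r m n hr
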